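/- For real a > 0, ∫₀^π sin(θ)·I₀(a·sin θ) dθ = (e^{a} − e^{−a})/a = 2·sinh(a)/a. -/

import Mathlib

open Real MeasureTheory intervalIntegral

section aux
open Finset

lemma prod_aux (n : ℕ) : (∏ i ∈ range n, (2 * (i : ℝ) + 2) / (2 * i + 3)) =
    2 ^ (2 * n) * (Nat.factorial n : ℝ)^2 / (Nat.factorial (2 * n + 1)) := by
  induction n with
  | zero => simp
  | succ k ih =>
    rw [prod_range_succ, ih]
    have h1 : (Nat.factorial (2 * k + 1) : ℝ) ≠ 0 := Nat.cast_ne_zero.2 (Nat.factorial_ne_zero _)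
    have h2 : ((Nat.factorial (2 * (k + 1) + 1) : ℝ)) =
        (2 * k + 3) * ((2 * k + 2) * (Nat.factorial (2 * k + 1) : ℝ)) := by
      have : 2 * (k + 1) + 1 = (2 * k + 1) + 1 + 1 := by ring
      rw [this, Nat.factorial_succ, Nat.factorial_succ]
      push_cast; ring
    have h3 : ((Nat.factorial (k + 1) : ℝ)) = (k + 1) * (Nat.factorial k : ℝ) := by
      rw [Nat.factorial_succ]; push_cast; ring
    rw [h2, h3]
    have h4 : (2 * (k:ℝ) + 3) ≠ 0 := by positivity
    have h5 : (2 * (k:ℝ) + 2) ≠ 0 := by positivity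
    field_simp
    ring

lemma sin_pow_odd (n : ℕ) : (∫ x in (0:ℝ)..π, Real.sin x ^ (2 * n + 1)) =
    2 ^ (2 * n + 1) * (Nat.factorial n : ℝ)^2 / (Nat.factorial (2 * n + 1)) := by
  rw [integral_sin_pow_odd, prod_aux]
  ring

lemma tsum_sinh (a : ℝ) (ha : a ≠ 0) :
    ∑' k : ℕ, 2 * a ^ (2 * k) / (Nat.factorial (2 * k + 1) : ℝ) =
      (Real.exp a - Real.exp (-a)) / a := by
  have hf : Summable (fun n : ℕ => a ^ n / (Nat.factorial n : ℝ)) :=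
    Real.summable_pow_div_factorial a
  have hg : Summable (fun n : ℕ => (-a) ^ n / (Nat.factorial n : ℝ)) :=
    Real.summable_pow_div_factorial (-a)
  have hexp : ∀ x : ℝ, Real.exp x = ∑' n : ℕ, x ^ n / (Nat.factorial n : ℝ) := by
    intro x
    rw [Real.exp_eq_exp_ℝ, NormedSpace.exp_eq_tsum_div]
  set h : ℕ → ℝ := fun n => a ^ n / (Nat.factorial n : ℝ) - (-a) ^ n / (Nat.factorial n : ℝ)
    with hdef
  have hh : Summable h := hf.sub hg
  have key : ∑' n : ℕ, h n = Real.exp a - Real.exp (-a) := by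
    rw [hf.tsum_sub hg, hexp a, hexp (-a)]
  -- even terms vanish, odd terms are 2*a^(2k+1)/(2k+1)!
  have heven : ∀ k : ℕ, h (2 * k) = 0 := by
    intro k
    simp [hdef, pow_mul, neg_sq]
  have hodd : ∀ k : ℕ, h (2 * k + 1) = 2 * a ^ (2 * k + 1) / (Nat.factorial (2 * k + 1) : ℝ) := by
    intro k
    simp only [hdef]
    rw [Odd.neg_pow ⟨k, by ring⟩]
    ring
  have hsplit := tsum_even_add_odd (hh.comp_injective (mul_right_injective₀ two_ne_zero))
    (hh.comp_injective ((add_left_injective 1).comp (mul_right_injective₀ two_ne_zero)))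
  rw [key] at hsplit
  have : ∑' k : ℕ, h (2 * k) = 0 := by simp [heven]
  rw [this, zero_add] at hsplit
  simp only [hodd] at hsplit
  rw [← hsplit, ← tsum_div_const]
  congr 1 with k
  rw [pow_succ]
  field_simp
end aux

/-- The modified Bessel function of the first kind of order zero,
`I₀(b) = Σ_{k≥0} (b/2)^{2k}/(k!)²`. -/
noncomputable def besselI0 (b : ℝ) : ℝ :=
  ∑' k : ℕ, (b / 2) ^ (2 * k) / ((Nat.factorial k : ℝ))^2

theorem integral_sin_besselI0 (a : ℝ) (ha : 0 < a) :
    (∫ θ in (0:ℝ)..π, Real.sin θ * besselI0 (a * Real.sin θ)) =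
      (Real.exp a - Real.exp (-a)) / a := by
  set f : ℕ → ℝ → ℝ := fun k θ =>
    Real.sin θ * ((a * Real.sin θ / 2) ^ (2 * k) / ((Nat.factorial k : ℝ))^2) with hfdef
  -- pointwise expansion
  have hpt : ∀ θ : ℝ, Real.sin θ * besselI0 (a * Real.sin θ) = ∑' k : ℕ, f k θ := by
    intro θ
    rw [besselI0, ← tsum_mul_left]
  -- continuity / integrability of each term
  have hcont : ∀ k : ℕ, Continuous (f k) := by
    intro k
    fun_prop
  have hint : ∀ k : ℕ, IntegrableOn (f k) (Set.Ioc 0 π) volume := fun k =>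
    (hcont k).integrableOn_Ioc
  -- summable bound
  have hbase : Summable (fun k : ℕ => (a / 2) ^ (2 * k) / ((Nat.factorial k : ℝ))^2) := by
    have hle : ∀ k : ℕ, (a / 2) ^ (2 * k) / ((Nat.factorial k : ℝ))^2
        ≤ (a ^ 2 / 4) ^ k / (Nat.factorial k : ℝ) := by
      intro k
      rw [pow_mul]
      have h1 : ((Nat.factorial k : ℝ)) ≤ ((Nat.factorial k : ℝ))^2 := by
        have := Nat.one_le_iff_ne_zero.2 (Nat.factorial_ne_zero k)
        have h2 : (1:ℝ) ≤ (Nat.factorial k : ℝ) := by exact_mod_cast this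
        nlinarith
      have h0 : (0:ℝ) < (Nat.factorial k : ℝ) := by positivity
      have hnum : ((a/2)^2)^k = (a^2/4)^k := by ring_nf
      rw [hnum]
      apply div_le_div_of_nonneg_left _ h0 h1
      positivity
    exact Summable.of_nonneg_of_le (fun k => by positivity) hle
      (Real.summable_pow_div_factorial _)
  have hb : Summable (fun k : ℕ => π * ((a / 2) ^ (2 * k) / ((Nat.factorial k : ℝ))^2)) :=
    hbase.mul_left π
  have hnorm : Summable (fun k : ℕ => ∫ θ in Set.Ioc 0 π, ‖f k θ‖) := by
    apply Summable.of_nonneg_of_le (fun k => integral_nonneg (fun θ => norm_nonneg _)) _ hb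
    intro k
    have hbd : ∀ θ ∈ Set.Ioc (0:ℝ) π, ‖f k θ‖ ≤ (a / 2) ^ (2 * k) / ((Nat.factorial k : ℝ))^2 := by
      intro θ hθ
      have h2 : |a * Real.sin θ / 2| ≤ a / 2 := by
        rw [abs_div, abs_mul, abs_of_pos ha, abs_of_pos (by norm_num : (0:ℝ) < 2)]
        have h1 := abs_sin_le_one θ
        calc a * |Real.sin θ| / 2 ≤ a * 1 / 2 := by gcongr
          _ = a / 2 := by ring
      have key : ‖f k θ‖ = |Real.sin θ| * (|a * Real.sin θ / 2| ^ (2*k) / ((Nat.factorial k : ℝ))^2) := by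
        rw [hfdef]
        simp only [Real.norm_eq_abs]
        rw [abs_mul, abs_div, abs_pow]
        congr 2
        exact abs_of_pos (by positivity)
      rw [key]
      calc |Real.sin θ| * (|a * Real.sin θ / 2| ^ (2*k) / ((Nat.factorial k : ℝ))^2)
          ≤ 1 * ((a/2) ^ (2*k) / ((Nat.factorial k : ℝ))^2) := by
            apply mul_le_mul (abs_sin_le_one θ) _ (by positivity) (by norm_num)
            gcongr
        _ = (a/2) ^ (2*k) / ((Nat.factorial k : ℝ))^2 := one_mul _
    calc (∫ θ in Set.Ioc 0 π, ‖f k θ‖)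
        ≤ ∫ θ in Set.Ioc (0:ℝ) π, ((a / 2) ^ (2 * k) / ((Nat.factorial k : ℝ))^2) := by
          apply setIntegral_mono_on (hint k).norm (integrableOn_const (by
            rw [Real.volume_Ioc]; exact ENNReal.ofReal_ne_top)) measurableSet_Ioc hbd
      _ = π * ((a / 2) ^ (2 * k) / ((Nat.factorial k : ℝ))^2) := by
          rw [setIntegral_const, measureReal_def, Real.volume_Ioc, smul_eq_mul, sub_zero,
            ENNReal.toReal_ofReal Real.pi_pos.le]
  -- swap integral and sum
  rw [intervalIntegral.integral_of_le Real.pi_pos.le]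
  simp only [hpt]
  rw [← MeasureTheory.integral_tsum_of_summable_integral_norm hint hnorm]
  -- compute each integral
  have hterm : ∀ k : ℕ, (∫ θ in Set.Ioc (0:ℝ) π, f k θ) =
      2 * a ^ (2 * k) / (Nat.factorial (2 * k + 1) : ℝ) := by
    intro k
    rw [← intervalIntegral.integral_of_le Real.pi_pos.le]
    have : ∀ θ : ℝ, f k θ = ((a/2) ^ (2*k) / ((Nat.factorial k : ℝ))^2) * Real.sin θ ^ (2*k+1) := by
      intro θ
      rw [hfdef]
      simp only
      have h : a * Real.sin θ / 2 = (a/2) * Real.sin θ := by ring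
      rw [h, mul_pow, pow_succ]
      ring
    simp only [this]
    rw [intervalIntegral.integral_const_mul, sin_pow_odd]
    have h0 : ((Nat.factorial k : ℝ)) ≠ 0 := Nat.cast_ne_zero.2 (Nat.factorial_ne_zero _)
    have h1 : ((Nat.factorial (2*k+1) : ℝ)) ≠ 0 := Nat.cast_ne_zero.2 (Nat.factorial_ne_zero _)
    have h2 : ((2:ℝ)) ^ (2*k) ≠ 0 := by positivity
    rw [div_pow, pow_succ]
    field_simp
    ring
  simp only [hterm]
  exact tsum_sinh a ha.ne'
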